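/- Let q be a prime power and M a matroid of rank at least 3 with an element e such that M \ e ≅ PG(r(M)-1, q). If the unique minimal flat F of M \ e spanning e has rank at least 2, then M/e has a U_{2,q²+1}-minor; if F has rank at least 3, then M/e has a U_{2,q²+q+1}-minor. -/

import Mathlib

open Matroid Set

namespace GrowthRate

variable {α : Type*}

/-- The rank of a set in a matroid: the supremum of cardinalities of independent subsets. -/
noncomputable def eRk (M : Matroid α) (X : Set α) : ℕ∞ :=
  ⨆ I ∈ {I : Set α | M.Indep I ∧ I ⊆ X}, I.encard

/-- The rank of a matroid. -/
noncomputable def eRank (M : Matroid α) : ℕ∞ := eRk M M.E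

/-- Rank as a natural number (for finite matroids). -/
noncomputable def rk (M : Matroid α) (X : Set α) : ℕ := (eRk M X).toNat

/-- Rank of a matroid as a natural number. -/
noncomputable def rank (M : Matroid α) : ℕ := (eRank M).toNat

/-- Deletion of a set of elements. -/
noncomputable def delete (M : Matroid α) (D : Set α) : Matroid α := M ↾ (M.E \ D)

/-- Contraction of a set of elements, defined via duality. -/
noncomputable def contract (M : Matroid α) (C : Set α) : Matroid α := (delete M✶ C)✶

/-- `N` is a minor of `M` if it is obtained by a contraction followed by a deletion. -/
def IsMinor (N M : Matroid α) : Prop := ∃ C D : Set α, N = delete (contract M C) D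

/-- The number of points (rank-one flats) of `M` contained in `X`. -/
noncomputable def nPoints (M : Matroid α) (X : Set α) : ℕ :=
  {P : Set α | M.IsFlat P ∧ eRk M P = 1 ∧ P ⊆ X}.ncard

/-- `ε(M)`: the number of points (rank-one flats) of `M`. -/
noncomputable def eps (M : Matroid α) : ℕ := {P : Set α | M.IsFlat P ∧ eRk M P = 1}.ncard

/-- A matroid is simple if all singletons and pairs of ground elements are independent. -/
def Simple (M : Matroid α) : Prop :=
  ∀ e ∈ M.E, ∀ f ∈ M.E, M.Indep {e} ∧ (e ≠ f → M.Indep {e, f})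

/-- `M` has a `U_{2,m}`-minor: a minor that is simple of rank two with `m` elements. -/
def HasUnifLineMinor (M : Matroid α) (m : ℕ) : Prop :=
  ∃ N : Matroid α, IsMinor N M ∧ eRank N = 2 ∧ Simple N ∧ N.E.encard = m

/-- A matroid is weakly round if its ground set is not the union of a set of rank
at most `r(M)-2` and a set of rank at most `r(M)-1`. -/
def WeaklyRound (M : Matroid α) : Prop :=
  ¬ ∃ A B : Set α, A ∪ B = M.E ∧ eRk M A + 2 ≤ eRank M ∧ eRk M B + 1 ≤ eRank M

/-- `q` is a prime power. -/
def IsPrimePower (q : ℕ) : Prop := ∃ p n : ℕ, p.Prime ∧ 0 < n ∧ q = p ^ n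

/-- `M` is isomorphic to the projective geometry `PG(n-1, |F|)` over the finite field `F`:
there is a representation `f` of `M` by vectors in `F^n` such that distinct elements get
non-parallel vectors and every direction in `F^n` is represented. -/
def IsPG (M : Matroid α) (F : Type) [Field F] [Fintype F] (n : ℕ) : Prop :=
  ∃ f : α → (Fin n → F),
    (∀ I ⊆ M.E, (M.Indep I ↔ LinearIndependent F (fun x : I => f x))) ∧
    (∀ e ∈ M.E, ∀ e' ∈ M.E, ∀ c : F, f e' = c • f e → e = e') ∧
    (∀ v : Fin n → F, v ≠ 0 → ∃ e ∈ M.E, ∃ c : F, c ≠ 0 ∧ v = c • f e)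

/-- `M` is `(q,k)`-overfull. -/
noncomputable def Overfull (M : Matroid α) (q k : ℕ) : Prop :=
  ((q : ℚ) ^ (rank M + k) - 1) / ((q : ℚ) - 1)
      - (q : ℚ) * ((q : ℚ) ^ (2 * k) - 1) / ((q : ℚ) ^ 2 - 1) < (eps M : ℚ)

/-!
For `S` avoiding `e`, minimality of `Fl` gives `e ∈ cl_M S ↔ Fl ⊆ cl_{M ＼ e} S`, so `S` is
independent in `M ／ e` iff it is independent in `M ＼ e` and its closure misses part of `Fl`.

If `Fl` is a line, pick a plane `H ⊇ Fl` of `M ＼ e`. After contracting `e` the `q + 1` points of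
`Fl` become parallel, while the `q²` points of `H \ Fl` and one point of `Fl` form a
`U_{2,q²+1}`: two of them never span `Fl`, three independent ones span `H ⊇ Fl`.

If `r(Fl) ≥ 3`, take a plane `cl Y` with `Y ⊆ Fl` and extend `Y` to a basis `B` of `Fl`. In
`M ／ e ／ (B \ Y)` two points of `cl Y` span a set of rank `|B| - 1 < r(Fl)`, three independent
ones span `Fl` with `B \ Y`, so the `q² + q + 1` points of `cl Y` form a `U_{2,q²+q+1}`.

The point counts hold because the elements of a rank-`k` flat of `PG(n-1, q)` correspond to the
points of `PG(k-1, q)`.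
-/

lemma delete_eq_delete (M : Matroid α) (D : Set α) : delete M D = M ＼ D := rfl

lemma contract_eq_contract (M : Matroid α) (C : Set α) : contract M C = M ／ C := rfl

lemma eRk_eq_eRk (M : Matroid α) (X : Set α) : eRk M X = M.eRk X := by
  refine le_antisymm (iSup₂_le fun I hI ↦ hI.1.encard_le_eRk_of_subset hI.2) ?_
  obtain ⟨I, hI⟩ := M.exists_isBasis' X
  rw [← hI.encard_eq_eRk]
  exact le_iSup₂ (f := fun I (_ : I ∈ {I | M.Indep I ∧ I ⊆ X}) ↦ I.encard) I ⟨hI.indep, hI.subset⟩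

lemma eRank_eq_eRank (M : Matroid α) : eRank M = M.eRank := by
  rw [eRank, eRk_eq_eRk, eRk_ground]

lemma Simple.indep_of_encard_le_two {M : Matroid α} (hM : Simple M) {J : Set α} (hJE : J ⊆ M.E)
    (hJ : J.encard ≤ 2) : M.Indep J := by
  by_cases h1 : J.encard ≤ 1
  · obtain rfl | ⟨a, rfl⟩ := encard_le_one_iff_eq.1 h1
    · exact M.empty_indep
    · exact (hM a (hJE rfl) a (hJE rfl)).1
  · obtain ⟨a, b, hab, rfl⟩ := encard_eq_two.1 (hJ.antisymm (Order.add_one_le_of_lt (not_le.1 h1)))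
    exact (hM a (hJE (by simp)) b (hJE (by simp))).2 hab

lemma hasUnifLineMinor_of_indep_union (N : Matroid α) {C T : Set α} {m : ℕ} (hTE : T ⊆ N.E)
    (hTC : Disjoint T C) (hTm : T.encard = m) (hm : 2 ≤ m)
    (hind : ∀ J ⊆ T, J.encard ≤ 2 → N.Indep (J ∪ C))
    (hdep : ∀ J ⊆ T, J.encard = 3 → ¬ N.Indep (J ∪ C)) :
    HasUnifLineMinor N m := by
  have hC : N.Indep C := by simpa using hind ∅ (empty_subset _) (by simp)
  have hL : (N ／ C) ＼ ((N.E \ C) \ T) = N ／ C ↾ T := by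
    rw [delete_eq_restrict, contract_ground, sdiff_sdiff_cancel_left (subset_sdiff.2 ⟨hTE, hTC⟩)]
  have hLi : ∀ J, (N ／ C ↾ T).Indep J ↔ N.Indep (J ∪ C) ∧ J ⊆ T := fun J ↦ by
    rw [restrict_indep_iff, hC.contract_indep_iff]
    exact ⟨fun h ↦ ⟨h.1.2, h.2⟩, fun h ↦ ⟨⟨hTC.mono_left h.2, h.1⟩, h.2⟩⟩
  have hT2 : (2 : ℕ∞) ≤ T.encard := hTm ▸ by exact_mod_cast hm
  refine ⟨N ／ C ↾ T, ⟨C, (N.E \ C) \ T, hL.symm⟩, ?_, ?_, by simpa⟩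
  · rw [eRank_eq_eRank, eRank_restrict]
    refine le_antisymm (eRk_le_iff.2 fun I hIT hI ↦ ?_) (le_eRk_iff.2 ?_)
    · by_contra! h3
      obtain ⟨J, hJI, hJ3⟩ := exists_subset_encard_eq (Order.add_one_le_of_lt h3)
      exact hdep J (hJI.trans hIT) hJ3 ((hC.contract_indep_iff.1 (hI.subset hJI)).2)
    · obtain ⟨J, hJT, hJ2⟩ := exists_subset_encard_eq hT2
      exact ⟨J, hJT, hC.contract_indep_iff.2 ⟨hTC.mono_left hJT, hind J hJT hJ2.le⟩, hJ2⟩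
  · intro a ha b hb
    simp only [restrict_ground_eq] at ha hb
    refine ⟨(hLi _).2 ⟨hind _ (by simpa) (by simp), by simpa⟩, fun hab ↦ (hLi _).2
      ⟨hind _ (pair_subset ha hb) (encard_pair hab).le, pair_subset ha hb⟩⟩

lemma _root_.Matroid.Indep.closure_eq_of_subset_closure {M : Matroid α} {J Y : Set α}
    (hJ : M.Indep J) (hJfin : J.Finite) (hJY : J ⊆ M.closure Y) (hY : M.eRk Y ≤ J.encard) :
    M.closure J = M.closure Y := by
  rw [(M.isRkFinite_of_finite hJfin).closure_eq_closure_of_subset_of_eRk_ge_eRk hJY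
    (by rwa [eRk_closure_eq, hJ.eRk_eq_encard]), closure_closure]

lemma _root_.Matroid.Indep.closure_union_sdiff_eq {M : Matroid α} {B J Y : Set α} (hJ : M.Indep J)
    (hJfin : J.Finite) (hJY : J ⊆ M.closure Y) (hY : M.eRk Y ≤ J.encard) (hYB : Y ⊆ B) :
    M.closure (J ∪ (B \ Y)) = M.closure B := by
  rw [← closure_union_closure_left_eq, hJ.closure_eq_of_subset_closure hJfin hJY hY,
    closure_union_closure_left_eq, union_sdiff_cancel hYB]

lemma _root_.Matroid.Indep.union_sdiff_indep_of_subset_closure {M : Matroid α} [M.RankFinite]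
    {B J Y : Set α} (hB : M.Indep B) (hYB : Y ⊆ B) (hJ : M.Indep J) (hJY : J ⊆ M.closure Y) :
    M.Indep (J ∪ (B \ Y)) := by
  obtain ⟨K, hK, hJK⟩ := hJ.subset_isBasis_of_subset hJY (M.closure_subset_ground Y)
  have hKY : K.encard = Y.encard := by
    rw [hK.encard_eq_eRk, eRk_closure_eq, (hB.subset hYB).eRk_eq_encard]
  refine ((M.isRkFinite_set _).indep_of_encard_le_eRk ?_).subset (union_subset_union_left _ hJK)
  rw [← eRk_closure_eq, hK.indep.closure_union_sdiff_eq hK.indep.finite hK.subset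
    (by rw [hKY, (hB.subset hYB).eRk_eq_encard]) hYB, eRk_closure_eq, hB.eRk_eq_encard,
    ← encard_sdiff_add_encard_of_subset hYB, add_comm, ← hKY]
  exact encard_union_le _ _

section Extension

variable {M : Matroid α} {e : α} {Fl : Set α}

lemma mem_closure_iff_subset_closure_delete (hsp : e ∈ M.closure Fl)
    (hmin : ∀ F', (M ＼ {e}).IsFlat F' → e ∈ M.closure F' → Fl ⊆ F') {S : Set α}
    (hS : S ⊆ M.E \ {e}) : e ∈ M.closure S ↔ Fl ⊆ (M ＼ {e}).closure S := by
  have hcl : (M ＼ {e}).closure S = M.closure S \ {e} :=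
    M.delete_closure_eq_of_disjoint (disjoint_singleton_right.2 fun he ↦ (hS he).2 rfl)
  refine ⟨fun he ↦ hmin _ (hcl ▸ (M ＼ {e}).isFlat_closure S) ?_, fun h ↦ ?_⟩
  · rw [hcl]
    exact M.closure_subset_closure (subset_sdiff.2 ⟨M.subset_closure S (hS.trans sdiff_subset),
      disjoint_singleton_right.2 fun he ↦ (hS he).2 rfl⟩) he
  · exact M.closure_subset_closure_of_subset_closure (h.trans (hcl ▸ sdiff_subset)) hsp

lemma isNonloop_of_eRk_ne_zero (hsp : e ∈ M.closure Fl)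
    (hmin : ∀ F', (M ＼ {e}).IsFlat F' → e ∈ M.closure F' → Fl ⊆ F')
    (hFl : (M ＼ {e}).eRk Fl ≠ 0) : M.IsNonloop e := by
  refine ⟨fun hloop ↦ hFl ?_, M.mem_ground_of_mem_closure hsp⟩
  have h := (mem_closure_iff_subset_closure_delete hsp hmin (empty_subset _)).1 hloop
  exact nonpos_iff_eq_zero.1 (((M ＼ {e}).eRk_mono h).trans_eq (by rw [eRk_closure_eq, eRk_empty]))

lemma contractElem_indep_iff_of_minimal (hsp : e ∈ M.closure Fl)
    (hmin : ∀ F', (M ＼ {e}).IsFlat F' → e ∈ M.closure F' → Fl ⊆ F') (he : M.IsNonloop e)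
    {S : Set α} : (M ／ {e}).Indep S ↔ (M ＼ {e}).Indep S ∧ ¬ Fl ⊆ (M ＼ {e}).closure S := by
  rw [he.contractElem_indep_iff, delete_indep_iff, disjoint_singleton_right]
  refine ⟨fun ⟨heS, hi⟩ ↦ ?_, fun ⟨⟨hi, heS⟩, hFl⟩ ↦ ?_⟩
  · have hS := hi.subset (subset_insert e S)
    rw [← mem_closure_iff_subset_closure_delete hsp hmin (subset_sdiff.2 ⟨hS.subset_ground,
      disjoint_singleton_right.2 heS⟩)]
    exact ⟨⟨hS, heS⟩, ((hS.insert_indep_iff_of_notMem heS).1 hi).2⟩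
  · rw [← mem_closure_iff_subset_closure_delete hsp hmin (subset_sdiff.2 ⟨hi.subset_ground,
      disjoint_singleton_right.2 heS⟩)] at hFl
    exact ⟨heS, (hi.insert_indep_iff_of_notMem heS).2 ⟨he.mem_ground, hFl⟩⟩

lemma hasUnifLineMinor_of_le_encard_closure (hsp : e ∈ M.closure Fl)
    (hmin : ∀ F', (M ＼ {e}).IsFlat F' → e ∈ M.closure F' → Fl ⊆ F') [(M ＼ {e}).RankFinite]
    (hP : Simple (M ＼ {e})) (hFlE : Fl ⊆ (M ＼ {e}).E) {Y : Set α} (hYFl : Y ⊆ Fl)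
    (hY : (M ＼ {e}).Indep Y) (hY3 : Y.encard = 3) {m : ℕ} (hm : 2 ≤ m)
    (hmY : m ≤ ((M ＼ {e}).closure Y).encard) :
    HasUnifLineMinor (M ／ {e}) m := by
  set P := M ＼ {e}
  obtain ⟨B, hB, hYB⟩ := hY.subset_isBasis_of_subset hYFl
  obtain ⟨T, hTY, hTm⟩ := exists_subset_encard_eq hmY
  have he : M.IsNonloop e := isNonloop_of_eRk_ne_zero hsp hmin fun h0 ↦ by
    have h := P.eRk_mono hYFl
    rw [h0, hY.eRk_eq_encard, hY3] at h
    exact absurd h (by norm_num)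
  obtain ⟨x, hx⟩ : ∃ x : ℕ, (B \ Y).encard = x :=
    ENat.ne_top_iff_exists.1 (hB.indep.finite.sdiff.encard_lt_top.ne) |>.imp fun _ h ↦ h.symm
  have hB3 : B.encard = x + 3 := by
    rw [← encard_sdiff_add_encard_of_subset hYB, hx, hY3]
  refine hasUnifLineMinor_of_indep_union _ (C := B \ Y) (hTY.trans (P.closure_subset_ground Y))
    (disjoint_left.2 fun t ht htB ↦ hB.indep.notMem_closure_sdiff_of_mem htB.1
      (P.closure_subset_closure (subset_sdiff_singleton hYB htB.2) (hTY ht))) hTm hm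
    (fun J hJT hJ2 ↦ ?_) (fun J hJT hJ3 hJi ↦ ?_)
  · have hJ : P.Indep J := hP.indep_of_encard_le_two (hJT.trans (hTY.trans
      (P.closure_subset_ground Y))) hJ2
    rw [contractElem_indep_iff_of_minimal hsp hmin he]
    refine ⟨hB.indep.union_sdiff_indep_of_subset_closure hYB hJ (hJT.trans hTY), fun hFl ↦ ?_⟩
    have h := (P.eRk_mono hFl).trans ((P.eRk_closure_eq _).trans_le (P.eRk_le_encard _))
    rw [← hB.encard_eq_eRk, hB3] at h
    have h' := h.trans ((encard_union_le _ _).trans (add_le_add hJ2 le_rfl))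
    rw [hx] at h'
    norm_cast at h'
    omega
  -- three independent points of `cl Y` span it, so together with `B \ Y` they span `Fl`
  · rw [contractElem_indep_iff_of_minimal hsp hmin he, (hJi.1.subset subset_union_left)
      |>.closure_union_sdiff_eq (finite_of_encard_eq_coe hJ3) (hJT.trans hTY)
      (by rw [hY.eRk_eq_encard, hY3, hJ3]) hYB] at hJi
    exact hJi.2 hB.subset_closure

lemma hasUnifLineMinor_of_isFlat_eRk_eq_two (hsp : e ∈ M.closure Fl)
    (hmin : ∀ F', (M ＼ {e}).IsFlat F' → e ∈ M.closure F' → Fl ⊆ F')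
    (hP : Simple (M ＼ {e})) (hFl : (M ＼ {e}).IsFlat Fl) (hFl2 : (M ＼ {e}).eRk Fl = 2)
    {w x : α} (hw : w ∈ (M ＼ {e}).E \ Fl) (hx : x ∈ Fl) {m : ℕ}
    (hm : (insert x ((M ＼ {e}).closure (insert w Fl) \ Fl)).encard = m) :
    HasUnifLineMinor (M ／ {e}) m := by
  set P := M ＼ {e}
  set H := P.closure (insert w Fl)
  have he : M.IsNonloop e := isNonloop_of_eRk_ne_zero hsp hmin (ne_of_eq_of_ne hFl2 two_ne_zero)
  have hwE : insert w Fl ⊆ P.E := insert_subset hw.1 hFl.subset_ground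
  have hFlH : Fl ⊆ H := (subset_insert w Fl).trans (P.subset_closure _ hwE)
  have hTH : insert x (H \ Fl) ⊆ H := insert_subset (hFlH hx) sdiff_subset
  have hwH : w ∈ H \ Fl := ⟨P.subset_closure _ hwE (mem_insert w Fl), hw.2⟩
  refine hasUnifLineMinor_of_indep_union _ (C := ∅) (hTH.trans (P.closure_subset_ground _))
    (disjoint_empty _) hm ?_ (fun J hJT hJ2 ↦ ?_) (fun J hJT hJ3 hJi ↦ ?_)
  · have h := hm ▸ encard_le_encard (pair_subset (mem_insert x _) (mem_insert_of_mem x hwH))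
    rw [encard_pair (ne_of_mem_of_not_mem hx hw.2)] at h
    exact_mod_cast h
  · have hJE : J ⊆ P.E := hJT.trans (hTH.trans (P.closure_subset_ground _))
    rw [union_empty, contractElem_indep_iff_of_minimal hsp hmin he]
    refine ⟨hP.indep_of_encard_le_two hJE hJ2, fun hFlJ ↦ ?_⟩
    have hJFl : J ⊆ Fl := by
      have hfin : P.IsRkFinite Fl := eRk_lt_top_iff.1 (hFl2.trans_lt (ENat.natCast_lt_top 2))
      have hcl := hfin.closure_eq_closure_of_subset_of_eRk_ge_eRk hFlJ
        (by rw [eRk_closure_eq, hFl2]; exact (P.eRk_le_encard J).trans hJ2)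
      rw [hFl.closure, Matroid.closure_closure] at hcl
      exact hcl ▸ P.subset_closure J hJE
    have hJx : J ⊆ {x} := fun j hj ↦ ((hJT hj).resolve_right fun h ↦ h.2 (hJFl hj))
    have h := (P.eRk_mono hFlJ).trans ((P.eRk_closure_eq _).trans_le
      ((P.eRk_le_encard _).trans ((encard_le_encard hJx).trans (encard_singleton x).le)))
    rw [hFl2] at h
    exact absurd h (by norm_num)
  · rw [union_empty, contractElem_indep_iff_of_minimal hsp hmin he] at hJi
    refine hJi.2 (hFlH.trans (hJi.1.closure_eq_of_subset_closure (finite_of_encard_eq_coe hJ3)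
      (hJT.trans hTH) ?_).symm.subset)
    rw [eRk_insert_eq_add_one (by rwa [hFl.closure]), hFl2, hJ3]
    rfl

end Extension

lemma mem_closure_iff_mem_span {K V : Type*} [DivisionRing K] [AddCommGroup V] [Module K V]
    {P : Matroid α} {f : α → V} (hf : ∀ I ⊆ P.E, P.Indep I ↔ LinearIndepOn K f I) {I : Set α}
    (hI : P.Indep I) {x : α} (hx : x ∈ P.E) :
    x ∈ P.closure I ↔ f x ∈ Submodule.span K (f '' I) := by
  by_cases hxI : x ∈ I
  · exact iff_of_true (P.subset_closure I hI.subset_ground hxI)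
      (Submodule.subset_span (mem_image_of_mem f hxI))
  have h := (hf _ (insert_subset hx hI.subset_ground)).trans (linearIndepOn_insert hxI)
  rw [hI.insert_indep_iff_of_notMem hxI, mem_sdiff, and_iff_right hx,
    and_iff_right ((hf I hI.subset_ground).1 hI)] at h
  exact not_iff_not.1 h

section ProjectiveGeometry

variable {F : Type} [Field F] [Fintype F] {n : ℕ} {P : Matroid α}

lemma IsPG.simple (h : IsPG P F n) (hn : n ≠ 0) : Simple P := by
  obtain ⟨f, hf1, hf2, hf3⟩ := h
  have hne : ∀ x ∈ P.E, f x ≠ 0 := fun x hx h0 ↦ by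
    obtain ⟨y, hy, c, -, hc⟩ := hf3 (Pi.single ⟨0, Nat.pos_of_ne_zero hn⟩ 1) (by simp)
    obtain rfl := hf2 y hy x hx 0 (by rw [h0, zero_smul])
    simp [h0] at hc
  intro x hx y hy
  refine ⟨(hf1 _ (by simpa)).2 ((linearIndepOn_singleton_iff F).2 (hne x hx)), fun hxy ↦
    (hf1 _ (pair_subset hx hy)).2 ((LinearIndepOn.pair_iff f hxy).2 fun c d hcd ↦ ?_)⟩
  by_cases hc : c = 0
  · subst hc
    exact ⟨rfl, (smul_eq_zero.1 (by simpa using hcd)).resolve_right (hne y hy)⟩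
  · refine absurd (hf2 y hy x hx (-c⁻¹ * d) ?_) hxy.symm
    rw [mul_smul, neg_smul, ← smul_neg, eq_comm, inv_smul_eq_iff₀ hc]
    exact (eq_neg_of_add_eq_zero_left hcd).symm

lemma IsPG.encard_isFlat (h : IsPG P F n) (hn : n ≠ 0) {K : Set α} (hK : P.IsFlat K) {k : ℕ}
    (hk : P.eRk K = k) : K.encard = ∑ i ∈ Finset.range k, Fintype.card F ^ i := by
  have hs := h.simple hn
  obtain ⟨f, hf1, hf2, hf3⟩ := h
  obtain ⟨I, hI⟩ := P.exists_isBasis K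
  have hKI : K = P.closure I := by rw [hI.closure_eq_closure, hK.closure]
  set W := Submodule.span F (f '' I)
  have hW : Module.finrank F W = k := Module.finrank_eq_of_rank_eq (Cardinal.toENat_eq_natCast.1
    ((toENat_rank_span_set ((hf1 I hI.indep.subset_ground).1 hI.indep)).trans
      (hI.encard_eq_eRk.trans hk)))
  have hmem : ∀ x ∈ K, x ∈ P.E ∧ f x ∈ W := fun x hx ↦ ⟨hK.subset_ground hx,
    (mem_closure_iff_mem_span hf1 hI.indep (hK.subset_ground hx)).1 (hKI ▸ hx)⟩
  have hne : ∀ x (hx : x ∈ K), (⟨f x, (hmem x hx).2⟩ : W) ≠ 0 := fun x hx h0 ↦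
    (linearIndepOn_singleton_iff F).1 ((hf1 _ (by simpa using (hmem x hx).1)).1
      (hs x (hmem x hx).1 x (hmem x hx).1).1) (congrArg Subtype.val h0)
  let φ : K → Projectivization F W := fun x ↦ Projectivization.mk F _ (hne x x.2)
  have hφ : Function.Bijective φ := by
    refine ⟨fun x y hxy ↦ ?_, Projectivization.ind fun v hv ↦ ?_⟩
    · obtain ⟨c, hc⟩ := (Projectivization.mk_eq_mk_iff' F _ _ _ _).1 hxy
      exact Subtype.ext
        (hf2 y (hmem y y.2).1 x (hmem x x.2).1 c (congrArg Subtype.val hc).symm).symm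
    · obtain ⟨z, hz, c, hc, hvz⟩ := hf3 v fun h0 ↦ hv (Subtype.ext h0)
      have hzW : f z ∈ W := by
        rw [← inv_smul_smul₀ hc (f z), ← hvz]
        exact W.smul_mem _ v.2
      refine ⟨⟨z, hKI ▸ (mem_closure_iff_mem_span hf1 hI.indep hz).2 hzW⟩,
        (Projectivization.mk_eq_mk_iff' F _ _ _ _).2 ⟨c⁻¹, Subtype.ext ?_⟩⟩
      simp [hvz, hc]
  change ENat.card K = _
  rw [ENat.card_congr (Equiv.ofBijective φ hφ), ENat.card_eq_coe_natCard,
    Projectivization.card_of_finrank F W hW, Nat.card_eq_fintype_card]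

end ProjectiveGeometry

lemma encard_insert_sdiff_of_mem {s t : Set α} {x : α} (hst : s ⊆ t) (hx : x ∈ s) {a b : ℕ}
    (ht : t.encard = a + b) (hs : s.encard = b) : (insert x (t \ s)).encard = a + 1 := by
  have h := encard_sdiff_add_encard_of_subset hst
  rw [ht, hs] at h
  rw [encard_insert_of_notMem fun h ↦ h.2 hx, WithTop.add_right_cancel (ENat.natCast_ne_top b) h]

section ProjectiveExtension

variable {F : Type} [Field F] [Fintype F] {n : ℕ} {M : Matroid α} {e : α} {Fl : Set α}

lemma IsPG.hasUnifLineMinor_of_three_le_eRk (hPG : IsPG (M ＼ {e}) F n) (hn : n ≠ 0)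
    [(M ＼ {e}).RankFinite] (hsp : e ∈ M.closure Fl)
    (hmin : ∀ F', (M ＼ {e}).IsFlat F' → e ∈ M.closure F' → Fl ⊆ F') (hFlE : Fl ⊆ (M ＼ {e}).E)
    (h3 : 3 ≤ (M ＼ {e}).eRk Fl) {m : ℕ} (hm2 : 2 ≤ m)
    (hm : m ≤ Fintype.card F ^ 2 + Fintype.card F + 1) : HasUnifLineMinor (M ／ {e}) m := by
  obtain ⟨Y, hYFl, hY, hY3⟩ := le_eRk_iff.1 h3
  refine hasUnifLineMinor_of_le_encard_closure hsp hmin (hPG.simple hn) hFlE hYFl hY hY3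
    hm2 ?_
  rw [hPG.encard_isFlat hn ((M ＼ {e}).isFlat_closure Y) (k := 3)
    (by rw [eRk_closure_eq, hY.eRk_eq_encard, hY3]; rfl)]
  simp only [Finset.sum_range_succ, Finset.sum_range_zero, pow_zero, pow_one, zero_add]
  exact_mod_cast (by omega : m ≤ 1 + Fintype.card F + Fintype.card F ^ 2)

lemma IsPG.hasUnifLineMinor_of_eRk_eq_two (hPG : IsPG (M ＼ {e}) F n) (hn : n ≠ 0)
    (hsp : e ∈ M.closure Fl) (hmin : ∀ F', (M ＼ {e}).IsFlat F' → e ∈ M.closure F' → Fl ⊆ F')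
    (hFl : (M ＼ {e}).IsFlat Fl)
    (hFl2 : (M ＼ {e}).eRk Fl = 2) (hM : 3 ≤ M.eRank) :
    HasUnifLineMinor (M ／ {e}) (Fintype.card F ^ 2 + 1) := by
  set P := M ＼ {e}
  obtain ⟨w, hw⟩ : (P.E \ Fl).Nonempty := by
    refine nonempty_iff_ne_empty.2 fun hE ↦ ?_
    have hME : M.E ⊆ M.closure Fl := fun y hy ↦ by
      obtain rfl | hye := eq_or_ne y e
      · exact hsp
      · exact M.subset_closure Fl (hFl.subset_ground.trans sdiff_subset)
          (sdiff_eq_empty.1 hE ⟨hy, hye⟩)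
    have h := M.eRk_mono hME
    have hFlM : P.eRk Fl = M.eRk Fl := restrict_eRk_eq M hFl.subset_ground
    rw [eRk_ground, eRk_closure_eq, ← hFlM, hFl2] at h
    exact absurd (hM.trans h) (by norm_num)
  obtain ⟨x, hx⟩ : Fl.Nonempty := nonempty_iff_ne_empty.2 fun h ↦ by simp [h] at hFl2
  have hwE : insert w Fl ⊆ P.E := insert_subset hw.1 hFl.subset_ground
  refine hasUnifLineMinor_of_isFlat_eRk_eq_two hsp hmin (hPG.simple hn) hFl hFl2 hw hx
    (encard_insert_sdiff_of_mem ((subset_insert w Fl).trans (P.subset_closure _ hwE)) hx ?_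
      (hPG.encard_isFlat hn hFl (k := 2) (by rw [hFl2]; rfl)))
  rw [hPG.encard_isFlat hn (P.isFlat_closure _) (k := 3) (by
    rw [eRk_closure_eq, eRk_insert_eq_add_one ⟨hw.1, by rw [hFl.closure]; exact hw.2⟩, hFl2]; rfl)]
  simp only [Finset.sum_range_succ, Finset.sum_range_zero]
  push_cast
  ring

end ProjectiveExtension

theorem statement_9_general {α : Type*} (F : Type) [Field F] [Fintype F]
    (M : Matroid α) (e : α) (hr : 3 ≤ rank M)
    (hPG : IsPG (delete M {e}) F (rank M))
    (Fl : Set α) (hFl : (delete M {e}).IsFlat Fl) (hsp : e ∈ M.closure Fl)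
    (hmin : ∀ F' : Set α, (delete M {e}).IsFlat F' → e ∈ M.closure F' → Fl ⊆ F') :
    (2 ≤ eRk (delete M {e}) Fl →
      HasUnifLineMinor (contract M {e}) (Fintype.card F ^ 2 + 1)) ∧
    (3 ≤ eRk (delete M {e}) Fl →
      HasUnifLineMinor (contract M {e}) (Fintype.card F ^ 2 + Fintype.card F + 1)) := by
  have hfin : M.eRank ≠ ⊤ := fun h ↦ by simp [rank, eRank_eq_eRank, h] at hr
  have hM : 3 ≤ M.eRank := by
    rw [← ENat.natCast_toNat hfin, ← eRank_eq_eRank]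
    exact_mod_cast hr
  have : M.RankFinite := M.eRank_ne_top_iff.1 hfin
  have hn : rank M ≠ 0 := by omega
  rw [delete_eq_delete] at hPG hFl hmin
  rw [delete_eq_delete, eRk_eq_eRk, contract_eq_contract]
  refine ⟨fun h2 ↦ ?_, fun h3 ↦ hPG.hasUnifLineMinor_of_three_le_eRk hn hsp hmin
    hFl.subset_ground h3 (by nlinarith [Fintype.card_pos (α := F)]) le_rfl⟩
  by_cases h3 : 3 ≤ (M ＼ {e}).eRk Fl
  · exact hPG.hasUnifLineMinor_of_three_le_eRk hn hsp hmin hFl.subset_ground h3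
      (by nlinarith [Fintype.card_pos (α := F)]) (by omega)
  · exact hPG.hasUnifLineMinor_of_eRk_eq_two hn hsp hmin hFl
      (le_antisymm (Order.le_of_lt_add_one (not_le.1 h3)) h2) hM

/-- Let `M \ e ≅ PG(r(M)-1,q)` with `r(M) ≥ 3`, and let `Fl` be the unique minimal
flat of `M \ e` spanning `e`. If `r(Fl) ≥ 2` then `M/e` has a `U_{2,q²+1}`-minor,
and if `r(Fl) ≥ 3` then `M/e` has a `U_{2,q²+q+1}`-minor. -/
theorem statement_9 {α : Type*} (F : Type) [Field F] [Fintype F]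
    (M : Matroid α) (e : α) (he : e ∈ M.E) (hr : 3 ≤ rank M)
    (hPG : IsPG (delete M {e}) F (rank M))
    (Fl : Set α) (hFl : (delete M {e}).IsFlat Fl) (hsp : e ∈ M.closure Fl)
    (hmin : ∀ F' : Set α, (delete M {e}).IsFlat F' → e ∈ M.closure F' → Fl ⊆ F') :
    (2 ≤ eRk (delete M {e}) Fl →
      HasUnifLineMinor (contract M {e}) (Fintype.card F ^ 2 + 1)) ∧
    (3 ≤ eRk (delete M {e}) Fl →
      HasUnifLineMinor (contract M {e}) (Fintype.card F ^ 2 + Fintype.card F + 1)) :=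
  statement_9_general F M e hr hPG Fl hFl hsp hmin

end GrowthRate
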